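/- arXiv:hep-th/0002245 — 7 statements merged into one kernel-verified Lean document; each statement's English description precedes it below -/
import Mathlib

section
/- Let Λ be a ℤ/2-graded-commutative ring (odd elements anticommute pairwise and square to zero, even elements are central) and let C be an n×n matrix all of whose entries lie in the odd part of Λ. Then the trace of every even power of C vanishes: tr(C^{2m}) = 0 for all m ≥ 1. -/
/-!
Expanding the trace, `tr (C ^ N)` is the sum, over closed walks `u : Fin N → ι`, of the ordered
product of the entries of `C` along `u`. Rotating a walk by one step moves one odd factor past the
`N - 1` others, so for even `N` it flips the sign of the product; hence the products along a
rotation orbit of even length cancel. A walk whose orbit has odd length `d` has `2 * d ≤ N` and an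
edge word fixed by rotation through `d` places, so the word begins with the same block twice; its
product vanishes because `p * p = 0` for every nonempty product `p` of odd elements.
-/

open Function

theorem ZMod.sum_comp_val {M : Type*} [AddCommMonoid M] (p : ℕ) [NeZero p] (g : ℕ → M) :
    ∑ k : ZMod p, g k.val = ∑ j ∈ Finset.range p, g j := by
  cases p with
  | zero => exact absurd rfl (NeZero.ne 0)
  | succ q => exact Fin.sum_univ_eq_sum_range g _

namespace Equiv.Perm

variable {α M : Type*} [AddCommGroup M] {σ : Equiv.Perm α} {f : α → M}

theorem apply_pow_eq_neg_one_pow_smul (hf : ∀ x, f (σ x) = -f x) (x : α) (j : ℕ) :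
    f ((σ ^ j) x) = (-1 : ℤ) ^ j • f x := by
  induction j with
  | zero => simp
  | succ j ih => rw [pow_succ', mul_apply, hf, ih, pow_succ', mul_smul, neg_one_smul]

theorem sum_eq_zero_of_apply_eq_neg [Fintype α] (hf : ∀ x, f (σ x) = -f x)
    (hodd : ∀ x, Odd (minimalPeriod σ x) → f x = 0) : ∑ x, f x = 0 := by
  classical
  have horbit (b : α) : ∑ y : MulAction.orbit (Subgroup.zpowers σ) b, f y = 0 := by
    rw [← (MulAction.orbitZPowersEquiv σ b).symm.sum_comp]
    simp only [MulAction.orbitZPowersEquiv_symm_apply, ZMod.cast_eq_val, zpow_natCast]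
    change ∑ k : ZMod (minimalPeriod (σ • ·) b), f ((σ ^ k.val) b) = 0
    simp only [apply_pow_eq_neg_one_pow_smul hf]
    rw [← Finset.sum_smul, ZMod.sum_comp_val _ fun j => (-1 : ℤ) ^ j, neg_one_geom_sum]
    split_ifs with hp
    · exact zero_smul ℤ _
    · rw [hodd b (Nat.not_even_iff_odd.mp hp), smul_zero]
  rw [← (MulAction.selfEquivSigmaOrbits (Subgroup.zpowers σ) α).symm.sum_comp,
    Fintype.sum_sigma]
  exact Finset.sum_eq_zero fun ω _ => horbit ω.out

end Equiv.Perm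

section Anticommuting

variable {Λ : Type*} [Ring Λ] {S : Set Λ}

theorem mul_list_prod_eq_neg_one_pow_smul (hanti : ∀ a ∈ S, ∀ b ∈ S, a * b = -(b * a))
    {a : Λ} (ha : a ∈ S) {l : List Λ} (hl : ∀ b ∈ l, b ∈ S) :
    a * l.prod = (-1 : ℤ) ^ l.length • (l.prod * a) := by
  induction l with
  | nil => simp
  | cons b l ih =>
    rw [List.forall_mem_cons] at hl
    rw [List.prod_cons, ← mul_assoc, hanti a ha b hl.1, neg_mul, mul_assoc, ih hl.2,
      mul_smul_comm, List.length_cons, pow_succ, mul_smul, neg_one_smul, mul_assoc, smul_neg]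

theorem list_prod_mul_self_eq_zero (hanti : ∀ a ∈ S, ∀ b ∈ S, a * b = -(b * a))
    (hsq : ∀ a ∈ S, a * a = 0) {l : List Λ} (hl : ∀ b ∈ l, b ∈ S) (hne : l ≠ []) :
    l.prod * l.prod = 0 := by
  obtain ⟨a, l, rfl⟩ := List.exists_cons_of_ne_nil hne
  rw [List.forall_mem_cons] at hl
  calc (a :: l).prod * (a :: l).prod = (-1 : ℤ) ^ l.length • (l.prod * a) * (a * l.prod) := by
        rw [List.prod_cons, mul_list_prod_eq_neg_one_pow_smul hanti hl.1 hl.2]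
    _ = (-1 : ℤ) ^ l.length • (l.prod * (a * a) * l.prod) := by
        rw [smul_mul_assoc, mul_assoc, mul_assoc, mul_assoc]
    _ = 0 := by rw [hsq a hl.1, mul_zero, zero_mul, smul_zero]

theorem list_prod_rotate_one_eq_neg (hanti : ∀ a ∈ S, ∀ b ∈ S, a * b = -(b * a))
    {l : List Λ} (hl : ∀ b ∈ l, b ∈ S) (hne : l ≠ []) (heven : Even l.length) :
    (l.rotate 1).prod = -l.prod := by
  obtain ⟨a, l, rfl⟩ := List.exists_cons_of_ne_nil hne
  rw [List.forall_mem_cons] at hl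
  have hodd : Odd l.length := by simpa [Nat.even_add_one] using heven
  rw [List.rotate_cons_succ, List.rotate_zero, List.prod_append, List.prod_singleton,
    List.prod_cons, mul_list_prod_eq_neg_one_pow_smul hanti hl.1 hl.2, hodd.neg_one_pow,
    neg_one_smul, neg_neg]

theorem list_prod_eq_zero_of_rotate_eq_self (hanti : ∀ a ∈ S, ∀ b ∈ S, a * b = -(b * a))
    (hsq : ∀ a ∈ S, a * a = 0) {l : List Λ} (hl : ∀ b ∈ l, b ∈ S) {d : ℕ} (hd : 0 < d)
    (hdl : 2 * d ≤ l.length) (hrot : l.rotate d = l) : l.prod = 0 := by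
  set t := l.take d with ht_def
  set r := l.drop d with hr_def
  have ht_len : t.length = d := List.length_take_of_le (by omega)
  have hrt : r ++ t = t ++ r := by
    rw [← List.rotate_eq_drop_append_take (by omega), hrot, List.take_append_drop]
  -- `r ++ t = t ++ r` with `t` no longer than `r` forces `r` to start with `t`.
  have hr : r = t ++ r.drop d := by
    have htake : r.take d = t := by
      have := congrArg (List.take d) hrt
      rwa [List.take_append_of_le_length (by simp [r]; omega), List.take_left' ht_len] at this
    rw [← htake, List.take_append_drop]
  have ht : ∀ b ∈ t, b ∈ S := fun b hb => hl b (List.mem_of_mem_take hb)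
  have ht_ne : t ≠ [] := List.ne_nil_of_length_pos (by omega)
  rw [← List.take_append_drop d l, ← ht_def, ← hr_def, hr, ← List.append_assoc,
    List.prod_append, List.prod_append, list_prod_mul_self_eq_zero hanti hsq ht ht_ne, zero_mul]

end Anticommuting

theorem List.ofFn_comp_finRotate {α : Type*} {N : ℕ} (f : Fin N → α) :
    List.ofFn (f ∘ finRotate N) = (List.ofFn f).rotate 1 := by
  cases N with
  | zero => simp
  | succ K =>
    rw [List.ofFn_succ', List.ofFn_succ, List.rotate_cons_succ, List.rotate_zero,
      List.concat_eq_append]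
    simp [Fin.coeSucc_eq_succ]

theorem finRotate_pow_self (N : ℕ) : finRotate N ^ N = 1 := by
  rcases lt_or_ge N 2 with h | h
  · interval_cases N <;> simp [Equiv.Perm.one_def]
  · have := pow_orderOf_eq_one (finRotate N)
    rwa [(isCycle_finRotate_of_le h).orderOf, support_finRotate_of_le h, Finset.card_univ,
      Fintype.card_fin] at this

section ClosedWalks

variable {Λ ι : Type*} {N : ℕ}

def rotateTuple (ι : Type*) (N : ℕ) : Equiv.Perm (Fin N → ι) :=
  (finRotate N).symm.arrowCongr (Equiv.refl ι)

theorem rotateTuple_apply (u : Fin N → ι) : rotateTuple ι N u = u ∘ finRotate N :=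
  rfl

theorem rotateTuple_iterate_apply (j : ℕ) (u : Fin N → ι) :
    (rotateTuple ι N)^[j] u = u ∘ (finRotate N)^[j] := by
  induction j with
  | zero => rfl
  | succ j ih => rw [iterate_succ_apply', ih, rotateTuple_apply, iterate_succ, comp_assoc]

theorem isPeriodicPt_rotateTuple (u : Fin N → ι) : IsPeriodicPt (rotateTuple ι N) N u := by
  rw [IsPeriodicPt, IsFixedPt, rotateTuple_iterate_apply, ← Equiv.Perm.coe_pow,
    finRotate_pow_self, Equiv.Perm.coe_one, comp_id]

namespace Matrix

def closedWalkEdges (C : Matrix ι ι Λ) (u : Fin N → ι) : List Λ :=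
  List.ofFn fun s => C (u s) (u (finRotate N s))

theorem length_closedWalkEdges (C : Matrix ι ι Λ) (u : Fin N → ι) :
    (closedWalkEdges C u).length = N :=
  List.length_ofFn

theorem closedWalkEdges_rotateTuple (C : Matrix ι ι Λ) (u : Fin N → ι) :
    closedWalkEdges C (rotateTuple ι N u) = (closedWalkEdges C u).rotate 1 := by
  rw [rotateTuple_apply]
  exact List.ofFn_comp_finRotate fun s => C (u s) (u (finRotate N s))

theorem closedWalkEdges_rotateTuple_iterate (C : Matrix ι ι Λ) (j : ℕ) (u : Fin N → ι) :
    closedWalkEdges C ((rotateTuple ι N)^[j] u) = (closedWalkEdges C u).rotate j := by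
  induction j with
  | zero => simp
  | succ j ih => rw [iterate_succ_apply', closedWalkEdges_rotateTuple, ih, List.rotate_rotate]

section Trace

variable [Ring Λ] [Fintype ι] [DecidableEq ι]

theorem trace_pow_mul_eq_sum (C D : Matrix ι ι Λ) (k : ℕ) :
    trace (C ^ k * D) = ∑ w : Fin (k + 1) → ι,
      (List.ofFn fun s : Fin k => C (w s.castSucc) (w s.succ)).prod * D (w (Fin.last k)) (w 0) := by
  induction k generalizing D with
  | zero =>
    rw [← (Equiv.funUnique (Fin 1) ι).symm.sum_comp]
    simp [trace]
  | succ k ih =>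
    rw [pow_succ, mul_assoc, ih]
    conv_rhs => rw [← (Fin.snocEquiv fun _ => ι).sum_comp, Fintype.sum_prod_type_right]
    refine Fintype.sum_congr _ _ fun w => ?_
    simp only [Fin.snocEquiv_apply, List.ofFn_succ', List.concat_eq_append, List.prod_append,
      Fin.succ_castSucc, Fin.snoc_castSucc, Fin.succ_last, Fin.snoc_last, List.prod_singleton]
    simp [mul_apply, Finset.mul_sum, mul_assoc]

theorem trace_pow_eq_sum_closedWalkEdges [NeZero N] (C : Matrix ι ι Λ) :
    trace (C ^ N) = ∑ u : Fin N → ι, (closedWalkEdges C u).prod := by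
  obtain ⟨K, rfl⟩ := Nat.exists_eq_succ_of_ne_zero (NeZero.ne N)
  rw [pow_succ, trace_pow_mul_eq_sum]
  refine Fintype.sum_congr _ _ fun u => ?_
  rw [closedWalkEdges, List.ofFn_succ', List.concat_eq_append, List.prod_append,
    List.prod_singleton]
  simp [Fin.coeSucc_eq_succ]

end Trace

section Odd

variable {S : Set Λ} {C : Matrix ι ι Λ} (hC : ∀ i j, C i j ∈ S)
include hC

theorem mem_of_mem_closedWalkEdges {u : Fin N → ι} {b : Λ} (hb : b ∈ closedWalkEdges C u) :
    b ∈ S := by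
  obtain ⟨s, rfl⟩ := List.mem_ofFn.mp hb
  exact hC _ _

variable [Ring Λ] (hanti : ∀ a ∈ S, ∀ b ∈ S, a * b = -(b * a))
include hanti

theorem prod_closedWalkEdges_rotateTuple [NeZero N] (hN : Even N) (u : Fin N → ι) :
    (closedWalkEdges C (rotateTuple ι N u)).prod = -(closedWalkEdges C u).prod := by
  rw [closedWalkEdges_rotateTuple]
  refine list_prod_rotate_one_eq_neg hanti (fun b => mem_of_mem_closedWalkEdges hC) ?_ ?_
  · exact List.ne_nil_of_length_pos (by rw [length_closedWalkEdges]; exact Nat.pos_of_neZero N)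
  · rwa [length_closedWalkEdges]

theorem prod_closedWalkEdges_eq_zero_of_odd_minimalPeriod (hsq : ∀ a ∈ S, a * a = 0) [NeZero N]
    (hN : Even N) {u : Fin N → ι} (hodd : Odd (minimalPeriod (rotateTuple ι N) u)) :
    (closedWalkEdges C u).prod = 0 := by
  set d := minimalPeriod (rotateTuple ι N) u
  have h2d : 2 * d ≤ N := by
    obtain ⟨e, he⟩ := (isPeriodicPt_rotateTuple u).minimalPeriod_dvd
    obtain ⟨k, rfl⟩ : Even e :=
      (Nat.even_mul.mp (he ▸ hN)).resolve_left (Nat.not_even_iff_odd.mpr hodd)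
    have : k ≠ 0 := by rintro rfl; exact NeZero.ne N (by simpa using he)
    rw [he]
    nlinarith [Nat.one_le_iff_ne_zero.mpr this]
  refine list_prod_eq_zero_of_rotate_eq_self hanti hsq (fun b => mem_of_mem_closedWalkEdges hC)
    hodd.pos (by rwa [length_closedWalkEdges]) ?_
  rw [← closedWalkEdges_rotateTuple_iterate, isPeriodicPt_minimalPeriod]

end Odd

end Matrix

end ClosedWalks

theorem stmt_2_general {Λ : Type*} [Ring Λ] (Λ₁ : AddSubgroup Λ)
    (hanti : ∀ a ∈ Λ₁, ∀ b ∈ Λ₁, a * b = -(b * a))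
    (hsq : ∀ a ∈ Λ₁, a * a = 0)
    {n : ℕ} (C : Matrix (Fin n) (Fin n) Λ)
    (hC : ∀ i j, C i j ∈ Λ₁) :
    ∀ m : ℕ, 1 ≤ m → Matrix.trace (C ^ (2 * m)) = 0 := by
  intro m hm
  have : NeZero (2 * m) := ⟨by omega⟩
  have hN : Even (2 * m) := even_two_mul m
  rw [Matrix.trace_pow_eq_sum_closedWalkEdges]
  exact Equiv.Perm.sum_eq_zero_of_apply_eq_neg (σ := rotateTuple (Fin n) (2 * m))
    (Matrix.prod_closedWalkEdges_rotateTuple (S := Λ₁) hC hanti hN)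
    (fun _ => Matrix.prod_closedWalkEdges_eq_zero_of_odd_minimalPeriod (S := Λ₁) hC hanti hsq hN)

/-- In a ℤ/2-graded-commutative (supercommutative) ring `Λ = Λ₀ ⊕ Λ₁` (even part central,
odd elements pairwise anticommuting and squaring to zero), the trace of every even power of
a matrix `C` with odd entries vanishes: `tr (C^(2m)) = 0` for all `m ≥ 1`. -/
theorem stmt_2 {Λ : Type*} [Ring Λ] (Λ₀ Λ₁ : AddSubgroup Λ)
    (hcentral : ∀ a ∈ Λ₀, ∀ b : Λ, a * b = b * a)
    (hanti : ∀ a ∈ Λ₁, ∀ b ∈ Λ₁, a * b = -(b * a))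
    (hsq : ∀ a ∈ Λ₁, a * a = 0)
    (hdecomp : ∀ x : Λ, ∃ a ∈ Λ₀, ∃ b ∈ Λ₁, x = a + b)
    (hdisj : Λ₀ ⊓ Λ₁ = ⊥)
    {n : ℕ} (C : Matrix (Fin n) (Fin n) Λ)
    (hC : ∀ i j, C i j ∈ Λ₁) :
    ∀ m : ℕ, 1 ≤ m → Matrix.trace (C ^ (2 * m)) = 0 :=
  stmt_2_general Λ₁ hanti hsq C hC
end

section
/- Let Λ be a ℤ/2-graded-commutative ring, C an n×n matrix with entries in the odd part of Λ, and s an odd derivation of Λ (extended entrywise to matrices) such that s(C_{ij}) = (C²)_{ij} for all i,j. Then s(tr(C^{2m-1})) = 0 for all m ≥ 1, i.e., the odd traces tr(C^{2m-1}) are s-closed. -/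
/-!
By the Leibniz rule for odd entries and `s C = C²`, applying `s` entrywise sends `C ^ (2k+1)` to
`C ^ (2k+2)` (and `C ^ (2k+2)` to `0`), so `s (tr C^(2m-1)) = tr C^(2m)`. The trace of an even
power of a matrix with anticommuting, square-zero entries vanishes. The tempting argument
`tr (C · C^(2m-1)) = -tr (C^(2m-1) · C)` only gives `2 · tr C^(2m) = 0`, so we expand the trace
over closed walks instead: a walk repeating an edge contributes `0`, rotating a walk flips the
sign of its contribution, and on walks with distinct edges rotation acts freely, so the
contributions cancel in blocks indexed by the position of the smallest edge.
-/

section Anticommuting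

variable {A : Type*} [Ring A] {S : Set A}

theorem mul_list_prod_eq_neg_one_pow_mul (hanti : ∀ a ∈ S, ∀ b ∈ S, a * b = -(b * a))
    {a : A} (ha : a ∈ S) {l : List A} (hl : ∀ x ∈ l, x ∈ S) :
    a * l.prod = (-1) ^ l.length * (l.prod * a) := by
  induction l with
  | nil => simp
  | cons b t ih =>
    simp only [List.forall_mem_cons] at hl
    rw [List.prod_cons, ← mul_assoc, hanti a ha b hl.1, neg_mul, mul_assoc, ih hl.2,
      ← mul_assoc b, ((Commute.neg_one_right b).pow_right _).eq, List.length_cons, pow_succ]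
    simp only [mul_assoc, mul_neg_one, neg_mul]

theorem mul_list_prod_eq_zero_of_mem (hanti : ∀ a ∈ S, ∀ b ∈ S, a * b = -(b * a))
    (hsq : ∀ a ∈ S, a * a = 0) {a : A} (ha : a ∈ S) {l : List A} (hl : ∀ x ∈ l, x ∈ S)
    (hal : a ∈ l) : a * l.prod = 0 := by
  induction l with
  | nil => simp at hal
  | cons b t ih =>
    simp only [List.forall_mem_cons] at hl
    rw [List.prod_cons, ← mul_assoc]
    rcases List.mem_cons.mp hal with rfl | hat
    · rw [hsq a ha, zero_mul]
    · rw [hanti a ha b hl.1, neg_mul, mul_assoc, ih hl.2 hat, mul_zero, neg_zero]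

theorem list_prod_eq_zero_of_not_nodup (hanti : ∀ a ∈ S, ∀ b ∈ S, a * b = -(b * a))
    (hsq : ∀ a ∈ S, a * a = 0) {l : List A} (hl : ∀ x ∈ l, x ∈ S) (hdup : ¬ l.Nodup) :
    l.prod = 0 := by
  induction l with
  | nil => simp at hdup
  | cons b t ih =>
    simp only [List.forall_mem_cons] at hl
    rw [List.prod_cons]
    by_cases hbt : b ∈ t
    · exact mul_list_prod_eq_zero_of_mem hanti hsq hl.1 hl.2 hbt
    · rw [ih hl.2 (fun ht => hdup (List.nodup_cons.mpr ⟨hbt, ht⟩)), mul_zero]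

end Anticommuting

theorem Function.argmin_comp_equiv {α β : Type*} [Nonempty α] [LinearOrder β] [WellFoundedLT β]
    {f : α → β} (hf : Function.Injective f) (σ : α ≃ α) :
    Function.argmin (f ∘ σ) = σ.symm (Function.argmin f) := by
  rw [Equiv.eq_symm_apply]
  refine hf (le_antisymm ?_ (Function.argmin_le f _))
  simpa using Function.argmin_le (f ∘ σ) (σ.symm (Function.argmin f))

theorem Fin.sum_eq_zero_of_finRotate_neg {A : Type*} [AddCommGroup A] {N : ℕ} (hN : Even N)
    (S : Fin N → A) (hS : ∀ k, S (finRotate N k) = -S k) : ∑ k, S k = 0 := by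
  obtain _ | N := N
  · simp
  have hS_pow : ∀ k : Fin (N + 1), S k = (-1 : ℤ) ^ (k : ℕ) • S 0 := by
    refine Fin.induction (by simp) fun k ih => ?_
    have hrot : finRotate (N + 1) k.castSucc = k.succ := by
      rw [finRotate_apply, Fin.coeSucc_eq_succ]
    rw [← hrot, hS, ih, hrot, Fin.val_succ, Fin.val_castSucc, pow_succ, mul_neg_one, neg_smul]
  rw [Fintype.sum_congr _ _ hS_pow, ← Finset.sum_smul,
    Fin.sum_univ_eq_sum_range (fun i => (-1 : ℤ) ^ i), neg_one_geom_sum, if_pos hN, zero_smul]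

theorem Fintype.sum_eq_zero_of_neg_of_finRotate {X A β : Type*} [Fintype X] [AddCommGroup A]
    [LinearOrder β] [WellFoundedLT β] {N : ℕ} [NeZero N] (hN : Even N)
    (ρ : X ≃ X) (w : X → A) (hw : ∀ x, w (ρ x) = -w x)
    (e : X → Fin N → β) (he : ∀ x, e (ρ x) = e x ∘ finRotate N)
    (hinj : ∀ x, w x ≠ 0 → Function.Injective (e x)) :
    ∑ x, w x = 0 := by
  classical
  -- On the support of `w`, `ρ` moves the position of the smallest label back by one step.
  set K : X → Fin N := fun x => Function.argmin (e x)
  have hK : ∀ x, w x ≠ 0 → K (ρ x) = (finRotate N).symm (K x) := fun x hx => by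
    simp only [K, he, Function.argmin_comp_equiv (hinj x hx)]
  rw [← Finset.sum_filter_ne_zero, ← Finset.sum_fiberwise _ K]
  refine Fin.sum_eq_zero_of_finRotate_neg hN _ fun k => ?_
  rw [← Finset.sum_neg_distrib]
  refine Finset.sum_equiv ρ (fun x => ?_) (fun x _ => (neg_neg (w x)).symm.trans (by rw [hw]))
  simp only [Finset.mem_filter, Finset.mem_univ, true_and, hw, ne_eq, neg_eq_zero]
  refine and_congr_right fun hx => ?_
  rw [hK x hx, Equiv.symm_apply_eq]

theorem List.prod_ofFn_comp_finRotate {M : Type*} [Monoid M] {k : ℕ} (g : Fin (k + 1) → M) :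
    (List.ofFn (g ∘ finRotate (k + 1))).prod = (List.ofFn fun t => g t.succ).prod * g 0 := by
  rw [List.ofFn_succ', List.prod_concat]
  simp [finRotate_apply, Fin.coeSucc_eq_succ]

namespace Matrix

variable {ι A : Type*}

def closedWalkProd [Monoid A] (C : Matrix ι ι A) {N : ℕ} (x : Fin N → ι) : A :=
  (List.ofFn fun t => C (x t) (x (finRotate N t))).prod

section Semiring

variable [Fintype ι] [DecidableEq ι] [Semiring A]

theorem pow_succ_apply_eq_sum (C : Matrix ι ι A) (k : ℕ) (i j : ι) :
    (C ^ (k + 1)) i j = ∑ x : Fin k → ι,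
      (List.ofFn fun t =>
        C (Fin.cons (α := fun _ => ι) i x t) (Fin.snoc (α := fun _ => ι) x j t)).prod := by
  induction k generalizing i with
  | zero => simp [Fin.snoc]
  | succ k ih =>
    rw [pow_succ', mul_apply, ← (Fin.consEquiv fun _ => ι).sum_comp, Fintype.sum_prod_type]
    refine Finset.sum_congr rfl fun l _ => ?_
    rw [ih, Finset.mul_sum]
    refine Finset.sum_congr rfl fun x _ => ?_
    conv_rhs => rw [List.ofFn_succ, List.prod_cons]
    simp [Fin.consEquiv, ← Fin.cons_snoc_eq_snoc_cons]

theorem trace_pow_succ_eq_sum_closedWalkProd (C : Matrix ι ι A) (k : ℕ) :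
    trace (C ^ (k + 1)) = ∑ x : Fin (k + 1) → ι, C.closedWalkProd x := by
  rw [trace, ← (Fin.consEquiv fun _ => ι).sum_comp, Fintype.sum_prod_type]
  refine Finset.sum_congr rfl fun i _ => ?_
  rw [diag_apply, pow_succ_apply_eq_sum]
  refine Finset.sum_congr rfl fun x _ => ?_
  simp [closedWalkProd, Fin.consEquiv, Fin.snoc_eq_cons_rotate]

end Semiring

variable [Ring A] {S : Set A}

theorem closedWalkProd_comp_finRotate (hanti : ∀ a ∈ S, ∀ b ∈ S, a * b = -(b * a))
    {C : Matrix ι ι A} (hC : ∀ i j, C i j ∈ S) {k : ℕ} (hk : Odd k) (x : Fin (k + 1) → ι) :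
    C.closedWalkProd (x ∘ finRotate (k + 1)) = -C.closedWalkProd x := by
  set g : Fin (k + 1) → A := fun t => C (x t) (x (finRotate _ t))
  have hg : ∀ a ∈ List.ofFn fun t : Fin k => g t.succ, a ∈ S := by simp [g, hC]
  change (List.ofFn (g ∘ finRotate _)).prod = -(List.ofFn g).prod
  rw [List.prod_ofFn_comp_finRotate g, List.ofFn_succ, List.prod_cons,
    mul_list_prod_eq_neg_one_pow_mul hanti (hC _ _) hg, List.length_ofFn, hk.neg_one_pow,
    neg_one_mul, neg_neg]

theorem closedWalkProd_eq_zero (hanti : ∀ a ∈ S, ∀ b ∈ S, a * b = -(b * a))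
    (hsq : ∀ a ∈ S, a * a = 0) {C : Matrix ι ι A} (hC : ∀ i j, C i j ∈ S) {N : ℕ}
    {x : Fin N → ι} (hx : ¬ Function.Injective fun t => (x t, x (finRotate N t))) :
    C.closedWalkProd x = 0 := by
  refine list_prod_eq_zero_of_not_nodup hanti hsq (by simp [hC]) fun hnd => hx ?_
  exact .of_comp (f := fun e : ι × ι => C e.1 e.2) (List.nodup_ofFn.mp hnd)

theorem trace_pow_eq_zero_of_even [Fintype ι] [DecidableEq ι]
    (hanti : ∀ a ∈ S, ∀ b ∈ S, a * b = -(b * a)) (hsq : ∀ a ∈ S, a * a = 0)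
    {C : Matrix ι ι A} (hC : ∀ i j, C i j ∈ S) {N : ℕ} (hN : Even N) (hN0 : N ≠ 0) :
    trace (C ^ N) = 0 := by
  obtain ⟨k, rfl⟩ := Nat.exists_eq_succ_of_ne_zero hN0
  have hk : Odd k := Nat.not_even_iff_odd.mp (Nat.even_add_one.mp hN)
  rw [trace_pow_succ_eq_sum_closedWalkProd]
  refine Fintype.sum_eq_zero_of_neg_of_finRotate hN ((finRotate _).symm.arrowCongr (.refl ι))
    _ (fun x => closedWalkProd_comp_finRotate hanti hC hk x)
    (fun x t => Fintype.equivFin (ι × ι) (x t, x (finRotate _ t))) (fun x => rfl) fun x hx => ?_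
  exact (Fintype.equivFin _).injective.comp
    (not_not.mp fun hx' => hx (closedWalkProd_eq_zero hanti hsq hC hx'))

theorem map_mul_of_odd_derivation {κ ν : Type*} [Fintype ι] {s : A →+ A}
    (hleib : ∀ a ∈ S, ∀ b, s (a * b) = s a * b - a * s b)
    {C : Matrix κ ι A} (hC : ∀ i j, C i j ∈ S) (D : Matrix ι ν A) :
    (C * D).map s = C.map s * D - C * D.map s := by
  ext i j
  simp [mul_apply, map_sum, hleib _ (hC _ _), Finset.sum_sub_distrib]

theorem map_pow_odd_of_odd_derivation [Fintype ι] [DecidableEq ι] {s : A →+ A}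
    (hleib : ∀ a ∈ S, ∀ b, s (a * b) = s a * b - a * s b)
    {C : Matrix ι ι A} (hC : ∀ i j, C i j ∈ S) (hsC : C.map s = C * C) (k : ℕ) :
    (C ^ (2 * k + 1)).map s = C ^ (2 * k + 2) := by
  induction k with
  | zero => rw [pow_one, hsC, sq]
  | succ k ih =>
    have h_even : (C ^ (2 * k + 2)).map s = 0 := by
      rw [pow_succ' C (2 * k + 1), map_mul_of_odd_derivation hleib hC, hsC, ih, mul_assoc,
        ← pow_succ', sub_self]
    rw [show 2 * (k + 1) + 1 = 2 * k + 2 + 1 by ring,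
      show 2 * (k + 1) + 2 = 2 * k + 2 + 1 + 1 by ring, pow_succ', map_mul_of_odd_derivation hleib hC, h_even, hsC, mul_zero, sub_zero, mul_assoc,
      ← pow_succ', ← pow_succ']

end Matrix

theorem stmt_3_general {Λ : Type*} [Ring Λ] (Λ₁ : AddSubgroup Λ)
    (hanti : ∀ a ∈ Λ₁, ∀ b ∈ Λ₁, a * b = -(b * a))
    (hsq : ∀ a ∈ Λ₁, a * a = 0)
    (s : Λ →+ Λ)
    (hleib1 : ∀ a ∈ Λ₁, ∀ b : Λ, s (a * b) = s a * b - a * s b)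
    {n : ℕ} (C : Matrix (Fin n) (Fin n) Λ)
    (hC : ∀ i j, C i j ∈ Λ₁)
    (hsC : ∀ i j, s (C i j) = (C * C) i j) :
    ∀ m : ℕ, 1 ≤ m → s (Matrix.trace (C ^ (2 * m - 1))) = 0 := by
  intro m hm
  obtain ⟨k, rfl⟩ : ∃ k, m = k + 1 := ⟨m - 1, by omega⟩
  rw [show 2 * (k + 1) - 1 = 2 * k + 1 by omega, AddMonoidHom.map_trace,
    Matrix.map_pow_odd_of_odd_derivation (S := Λ₁) hleib1 hC (Matrix.ext hsC)]
  exact Matrix.trace_pow_eq_zero_of_even (S := Λ₁) hanti hsq hC ⟨k + 1, by ring⟩ (by omega)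

/-- In a supercommutative ring `Λ = Λ₀ ⊕ Λ₁`, if `s` is an odd derivation and `C` an n×n
matrix with odd entries such that `s C = C²` entrywise, then the odd traces are `s`-closed:
`s (tr (C^(2m-1))) = 0` for all `m ≥ 1`. -/
theorem stmt_3 {Λ : Type*} [Ring Λ] (Λ₀ Λ₁ : AddSubgroup Λ)
    (hcentral : ∀ a ∈ Λ₀, ∀ b : Λ, a * b = b * a)
    (hanti : ∀ a ∈ Λ₁, ∀ b ∈ Λ₁, a * b = -(b * a))
    (hsq : ∀ a ∈ Λ₁, a * a = 0)
    (hdecomp : ∀ x : Λ, ∃ a ∈ Λ₀, ∃ b ∈ Λ₁, x = a + b)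
    (hdisj : Λ₀ ⊓ Λ₁ = ⊥)
    (s : Λ →+ Λ)
    (hodd0 : ∀ a ∈ Λ₀, s a ∈ Λ₁)
    (hodd1 : ∀ a ∈ Λ₁, s a ∈ Λ₀)
    (hleib0 : ∀ a ∈ Λ₀, ∀ b : Λ, s (a * b) = s a * b + a * s b)
    (hleib1 : ∀ a ∈ Λ₁, ∀ b : Λ, s (a * b) = s a * b - a * s b)
    {n : ℕ} (C : Matrix (Fin n) (Fin n) Λ)
    (hC : ∀ i j, C i j ∈ Λ₁)
    (hsC : ∀ i j, s (C i j) = (C * C) i j) :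
    ∀ m : ℕ, 1 ≤ m → s (Matrix.trace (C ^ (2 * m - 1))) = 0 :=
  stmt_3_general Λ₁ hanti hsq s hleib1 C hC hsC
end

section
/- (1-dimensional algebraic Poincaré lemma, part 1) Let A = k[u₀, u₁, u₂, …] be the polynomial ring over a field k of characteristic 0 in countably many variables, and let ∂ be the k-derivation determined by ∂(u_j) = u_{j+1} ('total derivative'). Define the Euler operator E : A → A by E(f) = Σ_{j≥0} (−1)^j ∂^j ( ∂f/∂u_j ). Then E annihilates every total derivative: E(∂f) = 0 for all f ∈ A. -/
/-!
The bracket `⁅∂/∂u_{j+1}, ∂⁆` is `∂/∂u_j` and `⁅∂/∂u_0, ∂⁆ = 0`, as one checks on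
generators.
Hence the terms of `E (∂ f)` telescope: the partial sums are
`∑_{j ≤ N} (-1)^j ∂^j (∂/∂u_j (∂ f)) = (-1)^N ∂^{N+1} (∂f/∂u_N)`,
and the right-hand side vanishes once `u_N` does not occur in `f`.
-/

noncomputable def totalDer (k : Type*) [CommRing k] :
    Derivation k (MvPolynomial ℕ k) (MvPolynomial ℕ k) :=
  MvPolynomial.mkDerivation k fun j => MvPolynomial.X (j + 1)

noncomputable def eulerOp (k : Type*) [CommRing k] (f : MvPolynomial ℕ k) :
    MvPolynomial ℕ k :=
  ∑ᶠ j : ℕ, ((-1 : ℤ) ^ j) • ((fun g => totalDer k g)^[j] (MvPolynomial.pderiv j f))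

open MvPolynomial Function

section

variable {k : Type*} [CommRing k]

lemma totalDer_X (j : ℕ) : totalDer k (X j : MvPolynomial ℕ k) = X (j + 1) :=
  mkDerivation_X k _ j

lemma commutator_pderiv_succ_totalDer (j : ℕ) :
    ⁅(pderiv (j + 1) : Derivation k (MvPolynomial ℕ k) _), totalDer k⁆ = pderiv j := by
  refine derivation_ext fun i => ?_
  simp only [Derivation.commutator_apply, totalDer_X, pderiv_X, Pi.single_apply]
  by_cases h : i = j <;> split_ifs <;> simp_all

lemma commutator_pderiv_zero_totalDer :
    ⁅(pderiv 0 : Derivation k (MvPolynomial ℕ k) _), totalDer k⁆ = 0 := by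
  refine derivation_ext fun i => ?_
  simp only [Derivation.commutator_apply, totalDer_X, pderiv_X, Pi.single_apply,
    Derivation.zero_apply]
  split_ifs <;> simp_all

lemma pderiv_succ_totalDer (j : ℕ) (f : MvPolynomial ℕ k) :
    pderiv (j + 1) (totalDer k f) = totalDer k (pderiv (j + 1) f) + pderiv j f := by
  have h := congrArg (· f) (commutator_pderiv_succ_totalDer (k := k) j)
  simp only [Derivation.commutator_apply] at h
  rw [← h, add_sub_cancel]

lemma pderiv_zero_totalDer (f : MvPolynomial ℕ k) :
    pderiv 0 (totalDer k f) = totalDer k (pderiv 0 f) := by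
  have h := congrArg (· f) (commutator_pderiv_zero_totalDer (k := k))
  simpa [Derivation.commutator_apply, sub_eq_zero] using h

lemma eulerOp_eq_sum_range {g : MvPolynomial ℕ k} (N : ℕ) (hg : ∀ j ≥ N, pderiv j g = 0) :
    eulerOp k g = ∑ j ∈ Finset.range N, (-1 : ℤ) ^ j • (totalDer k)^[j] (pderiv j g) := by
  refine finsum_eq_sum_of_support_subset _ fun j hj => ?_
  by_contra hjN
  simp_all [iterate_map_zero]

lemma sum_range_succ_euler_totalDer (f : MvPolynomial ℕ k) (N : ℕ) :
    ∑ j ∈ Finset.range (N + 1), (-1 : ℤ) ^ j • (totalDer k)^[j] (pderiv j (totalDer k f)) =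
      (-1 : ℤ) ^ N • (totalDer k)^[N + 1] (pderiv N f) := by
  induction N with
  | zero => simp [pderiv_zero_totalDer]
  | succ N ih =>
    rw [Finset.sum_range_succ, ih, pderiv_succ_totalDer, iterate_map_add, ← iterate_succ_apply,
      Nat.succ_eq_add_one, pow_succ, mul_neg_one, neg_smul, neg_smul, smul_add]
    abel

end

theorem stmt_10_general (k : Type*) [Field k] (f : MvPolynomial ℕ k) :
    eulerOp k (totalDer k f) = 0 := by
  obtain ⟨N, hN⟩ := Finset.exists_nat_subset_range f.vars
  have hf : ∀ j ≥ N, pderiv j f = 0 := fun j hj =>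
    pderiv_eq_zero_of_notMem_vars fun hj' => by have := Finset.mem_range.mp (hN hj'); omega
  have hDf : ∀ j ≥ N + 1, pderiv j (totalDer k f) = 0 := by
    rintro (_ | j) hj
    · omega
    · rw [pderiv_succ_totalDer, hf (j + 1) (by omega), hf j (by omega), map_zero, add_zero]
  rw [eulerOp_eq_sum_range (N + 1) hDf, sum_range_succ_euler_totalDer, hf N le_rfl,
    iterate_map_zero, smul_zero]

/-- 1-dimensional algebraic Poincaré lemma, part 1: the Euler operator annihilates every
total derivative, `E (∂ f) = 0`. -/
theorem stmt_10 (k : Type*) [Field k] [CharZero k] (f : MvPolynomial ℕ k) :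
    eulerOp k (totalDer k f) = 0 :=
  stmt_10_general k f
end

section
/- Let Ω = ⊕_{p,k} Ω^p_k be a bigraded vector space (p = form degree with 0 ≤ p ≤ n, k = antifield number ≥ 0) with two anticommuting differentials δ (of bidegree (0,−1)) and d (of bidegree (+1,0)): δ² = d² = δd + dδ = 0. Assume H_k(δ) = 0 for all k > 0 and H^p(d) = 0 for 0 < p < n. Then for all k > 1 and 1 < p ≤ n there is an isomorphism H^p_k(δ|d) ≅ H^{p−1}_{k−1}(δ|d), induced by the descent: a cocycle a^p_k with δa^p_k + da^{p−1}_{k−1} = 0 is mapped to the class of a^{p−1}_{k−1}. Here H^p_k(δ|d) is defined by cocycles δa + db = 0 modulo coboundaries a = δc + de. -/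
/-!
Descent is well defined because `δ(δa + db) = 0` makes `δb` a `d`-cocycle, hence `d`-exact.
Conversely, if `δb + dc = 0` then `db` is a `δ`-cycle, hence `δ`-exact, which produces the
ascendant `a`. Finally, if `b = δf + dg` then `a - df` is a `δ`-cycle, hence `a = δF + df`.
-/

section Descent

variable {R : Type*} [Semiring R] {Ω : ℕ → ℕ → Type*} [∀ p k, AddCommGroup (Ω p k)]
  [∀ p k, Module R (Ω p k)]
  {δ : ∀ p k, Ω p (k + 1) →ₗ[R] Ω p k} {d : ∀ p k, Ω p k →ₗ[R] Ω (p + 1) k}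

def IsDescent (δ : ∀ p k, Ω p (k + 1) →ₗ[R] Ω p k) (d : ∀ p k, Ω p k →ₗ[R] Ω (p + 1) k)
    {p k : ℕ} (a : Ω (p + 1) (k + 1)) (b : Ω p k) : Prop :=
  δ (p + 1) k a + d p k b = 0

def IsCoboundary (δ : ∀ p k, Ω p (k + 1) →ₗ[R] Ω p k) (d : ∀ p k, Ω p k →ₗ[R] Ω (p + 1) k)
    {p k : ℕ} (a : Ω (p + 1) (k + 1)) : Prop :=
  ∃ (F : Ω (p + 1) (k + 2)) (G : Ω p (k + 1)), a = δ (p + 1) (k + 1) F + d p (k + 1) G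

theorem delta_d_eq_neg_d_delta
    (hδd : ∀ p k (a : Ω p (k + 1)), d p k (δ p k a) + δ (p + 1) k (d p (k + 1) a) = 0)
    {p k : ℕ} (a : Ω p (k + 1)) :
    δ (p + 1) k (d p (k + 1) a) = -d p k (δ p k a) :=
  eq_neg_of_add_eq_zero_right (hδd p k a)

theorem IsDescent.exists_isDescent
    (hδd : ∀ p k (a : Ω p (k + 1)), d p k (δ p k a) + δ (p + 1) k (d p (k + 1) a) = 0)
    (hδδ : ∀ p k (a : Ω p (k + 2)), δ p k (δ p (k + 1) a) = 0)
    {p k : ℕ} (hd : ∀ x : Ω (p + 1) k, d (p + 1) k x = 0 → ∃ y, x = d p k y)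
    {a : Ω (p + 2) (k + 2)} {b : Ω (p + 1) (k + 1)} (h : IsDescent δ d a b) :
    ∃ c : Ω p k, IsDescent δ d b c := by
  have hdb : d (p + 1) (k + 1) b = -δ (p + 2) (k + 1) a := eq_neg_of_add_eq_zero_right h
  have hδb_closed : d (p + 1) k (δ (p + 1) k b) = 0 := by
    have := hδd (p + 1) k b
    rwa [hdb, map_neg, hδδ, neg_zero, add_zero] at this
  obtain ⟨c, hc⟩ := hd _ hδb_closed
  exact ⟨-c, by rw [IsDescent, hc, map_neg, add_neg_cancel]⟩

theorem IsDescent.exists_isDescent_left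
    (hδd : ∀ p k (a : Ω p (k + 1)), d p k (δ p k a) + δ (p + 1) k (d p (k + 1) a) = 0)
    (hdd : ∀ p k (a : Ω p k), d (p + 1) k (d p k a) = 0)
    {p k : ℕ} (hδ : ∀ x : Ω (p + 2) (k + 1), δ (p + 2) k x = 0 → ∃ y, x = δ (p + 2) (k + 1) y)
    {b : Ω (p + 1) (k + 1)} {c : Ω p k} (h : IsDescent δ d b c) :
    ∃ a : Ω (p + 2) (k + 2), IsDescent δ d a b := by
  have hδb : δ (p + 1) k b = -d p k c := eq_neg_of_add_eq_zero_left h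
  have hdb_closed : δ (p + 2) k (d (p + 1) (k + 1) b) = 0 := by
    rw [delta_d_eq_neg_d_delta hδd, hδb, map_neg, hdd, neg_zero, neg_zero]
  obtain ⟨a, ha⟩ := hδ _ hdb_closed
  exact ⟨-a, by rw [IsDescent, map_neg, ← ha, neg_add_cancel]⟩

theorem IsDescent.isCoboundary_of_isCoboundary
    (hδd : ∀ p k (a : Ω p (k + 1)), d p k (δ p k a) + δ (p + 1) k (d p (k + 1) a) = 0)
    (hdd : ∀ p k (a : Ω p k), d (p + 1) k (d p k a) = 0)
    {p k : ℕ} (hδ : ∀ x : Ω (p + 2) (k + 2), δ (p + 2) (k + 1) x = 0 →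
      ∃ y, x = δ (p + 2) (k + 2) y)
    {a : Ω (p + 2) (k + 2)} {b : Ω (p + 1) (k + 1)} (h : IsDescent δ d a b)
    (hb : IsCoboundary δ d b) : IsCoboundary δ d a := by
  obtain ⟨f, g, rfl⟩ := hb
  have hδ_closed : δ (p + 2) (k + 1) (a - d (p + 1) (k + 2) f) = 0 := by
    rw [IsDescent, map_add, hdd, add_zero] at h
    rw [map_sub, delta_d_eq_neg_d_delta hδd, sub_neg_eq_add, h]
  obtain ⟨F, hF⟩ := hδ _ hδ_closed
  exact ⟨F, f, eq_add_of_sub_eq hF⟩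

end Descent

/-- Descent isomorphism `H^p_k(δ|d) ≅ H^{p−1}_{k−1}(δ|d)` (for `k > 1`, `1 < p ≤ n`) in a
bigraded space with anticommuting differentials `δ` (antifield degree −1) and `d` (form
degree +1), given `H_k(δ) = 0` for `k > 0` and `H^p(d) = 0` for `0 < p < n`. Writing
`p = q+2`, `k = m+2`, the isomorphism induced by the descent `a ↦ b` (with `δa + db = 0`)
is encoded by: well-definedness (the descendant is a cocycle), surjectivity, and
injectivity on classes. -/
theorem stmt_12 (K : Type*) [Field K] (n : ℕ)
    (Ω : ℕ → ℕ → Type*) [∀ p q, AddCommGroup (Ω p q)] [∀ p q, Module K (Ω p q)]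
    (δ : ∀ p q, Ω p (q + 1) →ₗ[K] Ω p q)
    (d : ∀ p q, Ω p q →ₗ[K] Ω (p + 1) q)
    (hδδ : ∀ p q (a : Ω p (q + 2)), δ p q (δ p (q + 1) a) = 0)
    (hdd : ∀ p q (a : Ω p q), d (p + 1) q (d p q a) = 0)
    (hδd : ∀ p q (a : Ω p (q + 1)), d p q (δ p q a) + δ (p + 1) q (d p (q + 1) a) = 0)
    (hδacyc : ∀ p q (a : Ω p (q + 1)), δ p q a = 0 → ∃ b : Ω p (q + 2), a = δ p (q + 1) b)
    (hdpoin : ∀ p q, p + 1 < n → ∀ a : Ω (p + 1) q, d (p + 1) q a = 0 →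
      ∃ b : Ω p q, a = d p q b) :
    ∀ q m : ℕ, q + 2 ≤ n →
      ((∀ (a : Ω (q + 2) (m + 2)) (b : Ω (q + 1) (m + 1)),
          δ (q + 2) (m + 1) a + d (q + 1) (m + 1) b = 0 →
          ∃ c : Ω q m, δ (q + 1) m b + d q m c = 0) ∧
       (∀ b : Ω (q + 1) (m + 1), (∃ c : Ω q m, δ (q + 1) m b + d q m c = 0) →
          ∃ a : Ω (q + 2) (m + 2), δ (q + 2) (m + 1) a + d (q + 1) (m + 1) b = 0) ∧
       (∀ (a : Ω (q + 2) (m + 2)) (b : Ω (q + 1) (m + 1)),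
          δ (q + 2) (m + 1) a + d (q + 1) (m + 1) b = 0 →
          (∃ (f : Ω (q + 1) (m + 2)) (g : Ω q (m + 1)),
            b = δ (q + 1) (m + 1) f + d q (m + 1) g) →
          ∃ (F : Ω (q + 2) (m + 3)) (G : Ω (q + 1) (m + 2)),
            a = δ (q + 2) (m + 2) F + d (q + 1) (m + 2) G)) := by
  intro q m hqn
  refine ⟨fun a b h => ?_, fun b ⟨c, h⟩ => ?_, fun a b h hb => ?_⟩
  · exact IsDescent.exists_isDescent (δ := δ) hδd hδδ (hdpoin q m (by omega)) h
  · exact IsDescent.exists_isDescent_left (δ := δ) hδd hdd (hδacyc (q + 2) m) h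
  · exact IsDescent.isCoboundary_of_isCoboundary (δ := δ) hδd hdd (hδacyc (q + 2) (m + 1)) h hb
end

section
/- Under the same setup (s = δ + γ, δ of antifield degree −1 and acyclic in positive antifield number, γ of degree 0, finite expansions): the map sending the class of an s-cocycle a = a₀ + a₁ + … to the class of its antifield-independent part a₀ induces an isomorphism H(s) ≅ H(γ, H₀(δ)), where H₀(δ) is the homology of δ at antifield number 0 and γ acts on it since δγ + γδ = 0. Explicitly: (i) sa = 0 implies γa₀ + δa₁ = 0; (ii) every a₀ with γa₀ + δa₁ = 0 for some a₁ extends to an s-cocycle a = a₀ + a₁ + …; (iii) a = sb for some b if and only if a₀ = γb₀ + δb₁ for some b₀, b₁. -/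
/-!
Write `s = δ + γ` on families `a = (a_i)_i`. Both extension statements are instances of one
step: if `c` is an `s`-cocycle and `c_i = δ y + γ x`, then `δ (c_{i+1} - γ y)` vanishes by
`s c = 0`, `δγ = -γδ` and `γ² = 0`, so acyclicity of `δ` in positive antifield number yields
`z` with `c_{i+1} = δ z + γ y`. Iterating this step builds `b` with `c = s b` out of `b₀, b₁`;
taking `c = 0` builds an `s`-cocycle out of `a₀, a₁`.
-/

theorem exists_seq_of_forall_exists_succ {M : ℕ → Type*} (P : ∀ i, M i → M (i + 1) → Prop)
    (step : ∀ i x y, P i x y → ∃ z, P (i + 1) y z) {x₀ : M 0} {x₁ : M 1} (h : P 0 x₀ x₁) :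
    ∃ a : ∀ i, M i, a 0 = x₀ ∧ a 1 = x₁ ∧ ∀ i, P i (a i) (a (i + 1)) := by
  choose next hnext using step
  let pairs : ∀ i, {p : M i × M (i + 1) // P i p.1 p.2} := fun i =>
    Nat.rec ⟨(x₀, x₁), h⟩ (fun n p => ⟨(p.1.2, next n _ _ p.2), hnext n _ _ p.2⟩) i
  exact ⟨fun i => (pairs i).1.1, rfl, rfl, fun i => (pairs i).2⟩

section PerturbationStep

variable {K : Type*} [Semiring K] {M : ℕ → Type*} [∀ i, AddCommGroup (M i)]
  [∀ i, Module K (M i)] (δ : ∀ i, M (i + 1) →ₗ[K] M i) (γ : ∀ i, M i →ₗ[K] M i)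

theorem exists_succ_eq_of_eq_of_cocycle
    (hδγ : ∀ i (x : M (i + 1)), δ i (γ (i + 1) x) + γ i (δ i x) = 0)
    (hγγ : ∀ i (x : M i), γ i (γ i x) = 0)
    (hacyc : ∀ i (x : M (i + 1)), δ i x = 0 → ∃ y : M (i + 2), x = δ (i + 1) y)
    {c : ∀ i, M i} (hc : ∀ i, δ i (c (i + 1)) + γ i (c i) = 0)
    {i : ℕ} {x : M i} {y : M (i + 1)} (hxy : c i = δ i y + γ i x) :
    ∃ z : M (i + 2), c (i + 1) = δ (i + 1) z + γ (i + 1) y := by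
  have hδc : δ i (c (i + 1)) = -γ i (c i) := eq_neg_of_add_eq_zero_left (hc i)
  have hδγy : δ i (γ (i + 1) y) = -γ i (δ i y) := eq_neg_of_add_eq_zero_left (hδγ i y)
  have hclosed : δ i (c (i + 1) - γ (i + 1) y) = 0 := by
    rw [map_sub, hδc, hδγy, hxy, map_add, hγγ, add_zero, neg_sub_neg, sub_self]
  obtain ⟨z, hz⟩ := hacyc i _ hclosed
  exact ⟨z, by rw [← hz, sub_add_cancel]⟩

theorem exists_primitive_of_cocycle
    (hδγ : ∀ i (x : M (i + 1)), δ i (γ (i + 1) x) + γ i (δ i x) = 0)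
    (hγγ : ∀ i (x : M i), γ i (γ i x) = 0)
    (hacyc : ∀ i (x : M (i + 1)), δ i x = 0 → ∃ y : M (i + 2), x = δ (i + 1) y)
    {c : ∀ i, M i} (hc : ∀ i, δ i (c (i + 1)) + γ i (c i) = 0)
    {b₀ : M 0} {b₁ : M 1} (h₀ : c 0 = δ 0 b₁ + γ 0 b₀) :
    ∃ b : ∀ i, M i, b 0 = b₀ ∧ b 1 = b₁ ∧ ∀ i, c i = δ i (b (i + 1)) + γ i (b i) :=
  exists_seq_of_forall_exists_succ (fun i x y => c i = δ i y + γ i x)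
    (fun _ _ _ => exists_succ_eq_of_eq_of_cocycle δ γ hδγ hγγ hacyc hc) h₀

end PerturbationStep

theorem stmt_14_general (K : Type*) [Field K]
    (M : ℕ → Type*) [∀ i, AddCommGroup (M i)] [∀ i, Module K (M i)]
    (δ : ∀ i, M (i + 1) →ₗ[K] M i)
    (γ : ∀ i, M i →ₗ[K] M i)
    (hδγ : ∀ i (x : M (i + 1)), δ i (γ (i + 1) x) + γ i (δ i x) = 0)
    (hγγ : ∀ i (x : M i), γ i (γ i x) = 0)
    (hacyc : ∀ i (x : M (i + 1)), δ i x = 0 → ∃ y : M (i + 2), x = δ (i + 1) y) :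
    (∀ a : ∀ i, M i, (∀ i, δ i (a (i + 1)) + γ i (a i) = 0) →
        γ 0 (a 0) + δ 0 (a 1) = 0) ∧
    (∀ (a₀ : M 0) (a₁ : M 1), γ 0 a₀ + δ 0 a₁ = 0 →
        ∃ a : ∀ i, M i, a 0 = a₀ ∧ a 1 = a₁ ∧
          ∀ i, δ i (a (i + 1)) + γ i (a i) = 0) ∧
    (∀ a : ∀ i, M i, (∀ i, δ i (a (i + 1)) + γ i (a i) = 0) →
        ((∃ b : ∀ i, M i, ∀ i, a i = δ i (b (i + 1)) + γ i (b i)) ↔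
         (∃ (b₀ : M 0) (b₁ : M 1), a 0 = γ 0 b₀ + δ 0 b₁))) := by
  refine ⟨fun a ha => (add_comm _ _).trans (ha 0), fun a₀ a₁ h => ?_, fun a ha => ⟨?_, ?_⟩⟩
  · have hzero : ∀ i, δ i ((0 : ∀ i, M i) (i + 1)) + γ i ((0 : ∀ i, M i) i) = 0 := by simp
    obtain ⟨a, ha₀, ha₁, ha⟩ := exists_primitive_of_cocycle δ γ hδγ hγγ hacyc hzero
      ((add_comm _ _).trans h).symm
    exact ⟨a, ha₀, ha₁, fun i => (ha i).symm⟩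
  · rintro ⟨b, hb⟩
    exact ⟨b 0, b 1, (hb 0).trans (add_comm _ _)⟩
  · rintro ⟨b₀, b₁, hb⟩
    obtain ⟨b, -, -, hb⟩ := exists_primitive_of_cocycle δ γ hδγ hγγ hacyc ha
      (hb.trans (add_comm _ _))
    exact ⟨b, hb⟩

/-- Homological perturbation: with `s = δ + γ` (`δ` of antifield degree −1, acyclic in
positive antifield number, `γ` of degree 0, `δ² = δγ + γδ = γ² = 0`), working in the
completed space of families `a = (a_k)_{k∈ℕ}`, the map `[a] ↦ [a₀]` induces an
isomorphism `H(s) ≅ H(γ, H₀(δ))`. Explicitly: (i) `s a = 0` implies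
`γ a₀ + δ a₁ = 0`; (ii) every `a₀` with `γ a₀ + δ a₁ = 0` for some `a₁` extends to an
`s`-cocycle `a = a₀ + a₁ + …`; (iii) an `s`-cocycle `a` is `s`-exact iff
`a₀ = γ b₀ + δ b₁` for some `b₀, b₁`. -/
theorem stmt_14 (K : Type*) [Field K]
    (M : ℕ → Type*) [∀ i, AddCommGroup (M i)] [∀ i, Module K (M i)]
    (δ : ∀ i, M (i + 1) →ₗ[K] M i)
    (γ : ∀ i, M i →ₗ[K] M i)
    (hδδ : ∀ i (x : M (i + 2)), δ i (δ (i + 1) x) = 0)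
    (hδγ : ∀ i (x : M (i + 1)), δ i (γ (i + 1) x) + γ i (δ i x) = 0)
    (hγγ : ∀ i (x : M i), γ i (γ i x) = 0)
    (hacyc : ∀ i (x : M (i + 1)), δ i x = 0 → ∃ y : M (i + 2), x = δ (i + 1) y) :
    (∀ a : ∀ i, M i, (∀ i, δ i (a (i + 1)) + γ i (a i) = 0) →
        γ 0 (a 0) + δ 0 (a 1) = 0) ∧
    (∀ (a₀ : M 0) (a₁ : M 1), γ 0 a₀ + δ 0 a₁ = 0 →
        ∃ a : ∀ i, M i, a 0 = a₀ ∧ a 1 = a₁ ∧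
          ∀ i, δ i (a (i + 1)) + γ i (a i) = 0) ∧
    (∀ a : ∀ i, M i, (∀ i, δ i (a (i + 1)) + γ i (a i) = 0) →
        ((∃ b : ∀ i, M i, ∀ i, a i = δ i (b (i + 1)) + γ i (b i)) ↔
         (∃ (b₀ : M 0) (b₁ : M 1), a 0 = γ 0 b₀ + δ 0 b₁))) :=
  stmt_14_general K M δ γ hδγ hγγ hacyc
end

section
/- (Existence of the descent and s-closedness of the bottom) Let Ω^p (0 ≤ p ≤ n) carry anticommuting differentials s and d with H^p(d) = 0 for 0 < p < n, H⁰(d) = k, and assume no nonzero constant is s-exact (c = s ω⁰ with c ∈ k implies c = 0). Then every solution of s ω^m + d ω^{m−1} = 0 (with ω^{m−1} of form degree m−1 ≥ 0) gives rise to a chain of forms ω^p, p = m̲, …, m, for some 0 ≤ m̲ ≤ m, satisfying s ω^p + d ω^{p−1} = 0 for m̲ < p ≤ m and s ω^{m̲} = 0. -/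
/-!
Applying `s` to `s ω^{p+1} + d ω^p = 0` and using `s² = 0`, `sd = -ds` gives `d (s ω^p) = 0`.
For `p > 0`, exactness of `d` then yields `ω^{p-1}` with `s ω^p + d ω^{p-1} = 0`, and the
descent continues; at `p = 0`, `s ω⁰` is a constant which is `s`-exact, hence zero.
-/

section Descent

variable {K : Type*} [Semiring K] {Ω : ℕ → Type*} [∀ p, AddCommGroup (Ω p)]
  [∀ p, Module K (Ω p)] (s : ∀ p, Ω p →ₗ[K] Ω p) (d : ∀ p, Ω p →ₗ[K] Ω (p + 1))

def IsDescentChain (mb top : ℕ) (chain : ∀ p, Ω p) : Prop :=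
  mb ≤ top ∧ (∀ p, mb ≤ p → p < top → s (p + 1) (chain (p + 1)) + d p (chain p) = 0) ∧
    s mb (chain mb) = 0

variable {s d}

theorem IsDescentChain.update {mb top : ℕ} {chain : ∀ p, Ω p}
    (hc : IsDescentChain s d mb top chain) {ω : Ω (top + 1)}
    (hω : s (top + 1) ω + d top (chain top) = 0) :
    IsDescentChain s d mb (top + 1) (Function.update chain (top + 1) ω) := by
  obtain ⟨hmb, hstep, hbot⟩ := hc
  refine ⟨by omega, fun p hp hpt => ?_, ?_⟩
  · obtain rfl | hpt := eq_or_lt_of_le (Nat.le_of_lt_succ hpt)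
    · rwa [Function.update_self, Function.update_of_ne (by omega)]
    · rw [Function.update_of_ne (by omega), Function.update_of_ne (by omega)]
      exact hstep p hp hpt
  · rwa [Function.update_of_ne (by omega)]

theorem d_s_eq_zero_of_s_add_d_eq_zero (hss : ∀ p (a : Ω p), s p (s p a) = 0)
    (hsd : ∀ p (a : Ω p), s (p + 1) (d p a) + d p (s p a) = 0) {p : ℕ}
    {ω : Ω (p + 1)} {ω' : Ω p} (h : s (p + 1) ω + d p ω' = 0) : d p (s p ω') = 0 := by
  have hsdω : s (p + 1) (d p ω') = 0 := by
    simpa only [map_add, hss, zero_add, map_zero] using congrArg (s (p + 1)) h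
  simpa only [hsdω, zero_add] using hsd p ω'

theorem exists_s_add_d_eq_zero {p : ℕ}
    (hexact : ∀ a : Ω (p + 1), d (p + 1) a = 0 → ∃ b : Ω p, a = d p b)
    {ω : Ω (p + 1)} (h : d (p + 1) (s (p + 1) ω) = 0) :
    ∃ b : Ω p, s (p + 1) ω + d p b = 0 := by
  obtain ⟨b, hb⟩ := hexact _ h
  exact ⟨-b, by rw [map_neg, ← hb, add_neg_cancel]⟩

theorem s_zero_eq_zero_of_d_s_eq_zero (unit : K →ₗ[K] Ω 0)
    (hconst : ∀ a : Ω 0, d 0 a = 0 → ∃ c : K, a = unit c)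
    (hnoconst : ∀ c : K, (∃ w : Ω 0, unit c = s 0 w) → c = 0)
    {ω : Ω 0} (h : d 0 (s 0 ω) = 0) : s 0 ω = 0 := by
  obtain ⟨c, hc⟩ := hconst _ h
  rw [hc, hnoconst c ⟨ω, hc.symm⟩, map_zero]

theorem exists_isDescentChain (unit : K →ₗ[K] Ω 0) (n : ℕ)
    (hss : ∀ p (a : Ω p), s p (s p a) = 0)
    (hsd : ∀ p (a : Ω p), s (p + 1) (d p a) + d p (s p a) = 0)
    (hdpoin : ∀ p, p + 1 < n → ∀ a : Ω (p + 1), d (p + 1) a = 0 → ∃ b : Ω p, a = d p b)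
    (hconst : ∀ a : Ω 0, d 0 a = 0 → ∃ c : K, a = unit c)
    (hnoconst : ∀ c : K, (∃ w : Ω 0, unit c = s 0 w) → c = 0) :
    ∀ t < n, ∀ ω : Ω t, d t (s t ω) = 0 →
      ∃ (mb : ℕ) (chain : ∀ p, Ω p), chain t = ω ∧ IsDescentChain s d mb t chain := by
  intro t
  induction t with
  | zero =>
    intro _ ω h
    exact ⟨0, Pi.single 0 ω, Pi.single_eq_same 0 ω, le_rfl, fun p _ hp => absurd hp p.not_lt_zero,
      by rw [Pi.single_eq_same]; exact s_zero_eq_zero_of_d_s_eq_zero unit hconst hnoconst h⟩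
  | succ t ih =>
    intro ht ω h
    obtain ⟨b, hb⟩ := exists_s_add_d_eq_zero (hdpoin t ht) h
    obtain ⟨mb, chain, hchain, hc⟩ :=
      ih (by omega) b (d_s_eq_zero_of_s_add_d_eq_zero hss hsd hb)
    exact ⟨mb, _, Function.update_self _ _ _, hc.update (hchain ▸ hb)⟩

end Descent

theorem stmt_16_general (K : Type*) [Field K] (n : ℕ)
    (Ω : ℕ → Type*) [∀ p, AddCommGroup (Ω p)] [∀ p, Module K (Ω p)]
    (s : ∀ p, Ω p →ₗ[K] Ω p) (d : ∀ p, Ω p →ₗ[K] Ω (p + 1))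
    (unit : K →ₗ[K] Ω 0)
    (hss : ∀ p (a : Ω p), s p (s p a) = 0)
    (hsd : ∀ p (a : Ω p), s (p + 1) (d p a) + d p (s p a) = 0)
    (hdpoin : ∀ p, p + 1 < n → ∀ a : Ω (p + 1), d (p + 1) a = 0 → ∃ b : Ω p, a = d p b)
    (hconst : ∀ a : Ω 0, d 0 a = 0 ↔ ∃ c : K, a = unit c)
    (hnoconst : ∀ c : K, (∃ w : Ω 0, unit c = s 0 w) → c = 0) :
    ∀ t : ℕ, t + 1 ≤ n → ∀ (ωtop : Ω (t + 1)) (ω' : Ω t),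
      s (t + 1) ωtop + d t ω' = 0 →
      ∃ (mb : ℕ) (chain : ∀ p, Ω p), mb ≤ t + 1 ∧
        chain (t + 1) = ωtop ∧ chain t = ω' ∧
        (∀ p, mb ≤ p → p < t + 1 → s (p + 1) (chain (p + 1)) + d p (chain p) = 0) ∧
        s mb (chain mb) = 0 := by
  intro t ht ωtop ω' h
  obtain ⟨mb, chain, hchain, hc⟩ :=
    exists_isDescentChain unit n hss hsd hdpoin (fun a => (hconst a).mp) hnoconst t ht ω'
      (d_s_eq_zero_of_s_add_d_eq_zero hss hsd h)
  obtain ⟨hmb, hstep, hbot⟩ := hc.update (hchain ▸ h)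
  exact ⟨mb, _, hmb, Function.update_self _ _ _,
    by rwa [Function.update_of_ne (by omega)], hstep, hbot⟩

/-- Existence of the descent and `s`-closedness of the bottom: in a complex of form
degrees `0 ≤ p ≤ n` with anticommuting differentials `s`, `d`, with `H^p(d) = 0` for
`0 < p < n`, `H⁰(d) = K` (constants, embedded by `unit`), and no nonzero constant
`s`-exact, every solution of `s ω^m + d ω^{m−1} = 0` (written `m = t+1`) gives rise to a
chain of forms `ω^p`, `p = m̲, …, m` (for some `0 ≤ m̲ ≤ m`, with top the given data)
satisfying `s ω^p + d ω^{p−1} = 0` for `m̲ < p ≤ m` and `s ω^{m̲} = 0`. -/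
theorem stmt_16 (K : Type*) [Field K] (n : ℕ)
    (Ω : ℕ → Type*) [∀ p, AddCommGroup (Ω p)] [∀ p, Module K (Ω p)]
    (s : ∀ p, Ω p →ₗ[K] Ω p) (d : ∀ p, Ω p →ₗ[K] Ω (p + 1))
    (unit : K →ₗ[K] Ω 0)
    (hss : ∀ p (a : Ω p), s p (s p a) = 0)
    (hdd : ∀ p (a : Ω p), d (p + 1) (d p a) = 0)
    (hsd : ∀ p (a : Ω p), s (p + 1) (d p a) + d p (s p a) = 0)
    (hdpoin : ∀ p, p + 1 < n → ∀ a : Ω (p + 1), d (p + 1) a = 0 → ∃ b : Ω p, a = d p b)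
    (hconst : ∀ a : Ω 0, d 0 a = 0 ↔ ∃ c : K, a = unit c)
    (hnoconst : ∀ c : K, (∃ w : Ω 0, unit c = s 0 w) → c = 0) :
    ∀ t : ℕ, t + 1 ≤ n → ∀ (ωtop : Ω (t + 1)) (ω' : Ω t),
      s (t + 1) ωtop + d t ω' = 0 →
      ∃ (mb : ℕ) (chain : ∀ p, Ω p), mb ≤ t + 1 ∧
        chain (t + 1) = ωtop ∧ chain t = ω' ∧
        (∀ p, mb ≤ p → p < t + 1 → s (p + 1) (chain (p + 1)) + d p (chain p) = 0) ∧
        s mb (chain mb) = 0 :=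
  stmt_16_general K n Ω s d unit hss hsd hdpoin hconst hnoconst
end

section
/- Let Λ(C¹,…,C^R) be the exterior algebra over a field k of characteristic 0 on anticommuting generators C^I, with odd partial derivatives ∂_I = ∂/∂C^I. If P₁,…,P_R ∈ Λ(C) satisfy the symmetry condition ∂_I P_J + ∂_J P_I = 0 for all I, J, then there exists a single P ∈ Λ(C) with P_I = ∂_I P for all I. -/
/-- The (left, odd) partial derivative `∂_I = ∂/∂C^I` on the exterior algebra
`Λ(C¹,…,C^R)`, written on the monomial basis: a basis element is a finite set `S`
representing the ordered product `C_S`, and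
`∂_I C_S = (-1)^{#{l∈S : l<I}} C_{S∖{I}}` if `I ∈ S`, else `0`. -/
noncomputable def extPDeriv (k : Type*) [Field k] (R : ℕ) (I : Fin R) :
    ((Finset (Fin R)) →₀ k) →ₗ[k] ((Finset (Fin R)) →₀ k) :=
  Finsupp.lsum k fun S =>
    LinearMap.toSpanSingleton k _
      (if I ∈ S then
        ((-1 : k) ^ ((S.filter (fun j => j < I)).card)) • Finsupp.single (S.erase I) (1 : k)
      else 0)

/-!
The symmetry condition says that the coefficient `± P_J(T ∖ {J})` of the monomial `C_T` in
`C^J P_J` does not depend on `J ∈ T`. Hence the Koszul homotopy `Q = N⁻¹ ∑_J C^J P_J`,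
with `N` the degree operator, has as coefficient of `C_T` exactly that common value, and
differentiating by `C^I` recovers `P_I`; the coefficients of `P_I` on monomials containing
`C^I` vanish because `2 ∂_I P_I = 0`.
-/

open Finset

section signBelow

variable (k : Type*) [Ring k] {α : Type*} [LinearOrder α]

/-- The sign picked up by moving a generator `C^a` past the generators `C^j`, `j ∈ S`, `j < a`. -/
def signBelow (S : Finset α) (a : α) : k :=
  (-1) ^ (S.filter (fun j => j < a)).card

variable {k}

theorem signBelow_mul_self (S : Finset α) (a : α) : signBelow k S a * signBelow k S a = 1 := by
  rw [signBelow, ← pow_add, Even.neg_one_pow ⟨_, rfl⟩]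

theorem signBelow_ne_zero [Nontrivial k] (S : Finset α) (a : α) : signBelow k S a ≠ 0 :=
  left_ne_zero_of_mul_eq_one (signBelow_mul_self S a)

theorem signBelow_insert_of_not_lt {S : Finset α} {a b : α} (h : ¬b < a) :
    signBelow k (insert b S) a = signBelow k S a := by
  rw [signBelow, filter_insert, if_neg h, signBelow]

theorem signBelow_insert_of_lt {S : Finset α} {a b : α} (hb : b ∉ S) (h : b < a) :
    signBelow k (insert b S) a = -signBelow k S a := by
  rw [signBelow, filter_insert, if_pos h,
    card_insert_of_notMem (fun hb' => hb (mem_filter.1 hb').1), pow_succ, mul_neg_one, signBelow]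

end signBelow

section extPDeriv

variable {k : Type*} [Field k] {R : ℕ}

theorem extPDeriv_apply_of_mem {I : Fin R} {S : Finset (Fin R)} (hI : I ∈ S)
    (x : Finset (Fin R) →₀ k) : extPDeriv k R I x S = 0 := by
  rw [extPDeriv, Finsupp.lsum_apply, Finsupp.sum_apply]
  refine sum_eq_zero fun T _ => ?_
  have hTS : T.erase I ≠ S := fun h => notMem_erase I T (h ▸ hI)
  dsimp only
  split_ifs <;> simp [hTS]

theorem extPDeriv_apply_of_notMem {I : Fin R} {S : Finset (Fin R)} (hI : I ∉ S)
    (x : Finset (Fin R) →₀ k) : extPDeriv k R I x S = signBelow k S I * x (insert I S) := by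
  rw [extPDeriv, Finsupp.lsum_apply, Finsupp.sum_apply, Finsupp.sum_eq_single (insert I S)]
  · simp [signBelow, erase_insert hI, filter_insert, mul_comm]
  · intro T _ hT
    split_ifs with hIT
    · have hTS : T.erase I ≠ S := fun h => hT (h ▸ (insert_erase hIT).symm)
      simp [hTS]
    · simp
  · simp

end extPDeriv

section closedFamily

variable {k : Type*} [Field k] {R : ℕ} {P : Fin R → Finset (Fin R) →₀ k}

theorem apply_eq_zero_of_mem_of_pderiv_symm [CharZero k]
    (h : ∀ I J, extPDeriv k R I (P J) + extPDeriv k R J (P I) = 0)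
    {I : Fin R} {T : Finset (Fin R)} (hI : I ∈ T) : P I T = 0 := by
  have hII := DFunLike.congr_fun (h I I) (T.erase I)
  rw [Finsupp.add_apply, Finsupp.zero_apply, add_self_eq_zero,
    extPDeriv_apply_of_notMem (notMem_erase I T), insert_erase hI] at hII
  exact (mul_eq_zero.1 hII).resolve_left (signBelow_ne_zero _ _)

theorem signBelow_mul_apply_erase_eq_of_pderiv_symm
    (h : ∀ I J, extPDeriv k R I (P J) + extPDeriv k R J (P I) = 0)
    {I J : Fin R} {T : Finset (Fin R)} (hI : I ∈ T) (hJ : J ∈ T) :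
    signBelow k T I * P I (T.erase I) = signBelow k T J * P J (T.erase J) := by
  obtain rfl | hIJ := eq_or_ne I J
  · rfl
  set U := (T.erase I).erase J
  have hIU : I ∉ U := fun hU => notMem_erase I T (mem_of_mem_erase hU)
  have hJU : J ∉ U := notMem_erase J _
  have hTI : T.erase I = insert J U := (insert_erase (mem_erase.2 ⟨hIJ.symm, hJ⟩)).symm
  have hTJ : T.erase J = insert I U := by
    rw [show U = (T.erase J).erase I from erase_right_comm,
      insert_erase (mem_erase.2 ⟨hIJ, hI⟩)]
  have hT : T = insert I (insert J U) := by rw [← hTI, insert_erase hI]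
  have hIJU := DFunLike.congr_fun (h I J) U
  rw [Finsupp.add_apply, Finsupp.zero_apply, extPDeriv_apply_of_notMem hIU,
    extPDeriv_apply_of_notMem hJU] at hIJU
  have hUI := signBelow_mul_self (k := k) U I
  have hUJ := signBelow_mul_self (k := k) U J
  rw [hTI, hTJ, hT, signBelow_insert_of_not_lt (lt_irrefl I), Finset.insert_comm,
    signBelow_insert_of_not_lt (lt_irrefl J)]
  rcases hIJ.lt_or_gt with hlt | hlt
  · rw [signBelow_insert_of_not_lt hlt.not_gt, signBelow_insert_of_lt hIU hlt]
    linear_combination signBelow k U I * signBelow k U J * hIJU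
      - signBelow k U J * P J (insert I U) * hUI - signBelow k U I * P I (insert J U) * hUJ
  · rw [signBelow_insert_of_lt hJU hlt, signBelow_insert_of_not_lt hlt.not_gt]
    linear_combination -signBelow k U I * signBelow k U J * hIJU
      + signBelow k U J * P J (insert I U) * hUI + signBelow k U I * P I (insert J U) * hUJ

noncomputable def koszulPrimitive (P : Fin R → Finset (Fin R) →₀ k) :
    Finset (Fin R) →₀ k :=
  Finsupp.equivFunOnFinite.symm fun T =>
    (#T : k)⁻¹ * ∑ J ∈ T, signBelow k T J * P J (T.erase J)

theorem koszulPrimitive_apply_of_mem [CharZero k]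
    (h : ∀ I J, extPDeriv k R I (P J) + extPDeriv k R J (P I) = 0)
    {I : Fin R} {T : Finset (Fin R)} (hI : I ∈ T) :
    koszulPrimitive P T = signBelow k T I * P I (T.erase I) := by
  have hcard : (#T : k) ≠ 0 := Nat.cast_ne_zero.2 (card_ne_zero_of_mem hI)
  rw [koszulPrimitive, Finsupp.equivFunOnFinite_symm_apply_apply,
    sum_congr rfl fun J hJ => (signBelow_mul_apply_erase_eq_of_pderiv_symm h hI hJ).symm,
    sum_const, nsmul_eq_mul, inv_mul_cancel_left₀ hcard]

end closedFamily

/-- If `P₁,…,P_R` in the exterior algebra `Λ(C¹,…,C^R)` over a char-0 field satisfy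
`∂_I P_J + ∂_J P_I = 0` for all `I, J`, then there is a single `P` with `P_I = ∂_I P`. -/
theorem stmt_19 (k : Type*) [Field k] [CharZero k] (R : ℕ)
    (P : Fin R → ((Finset (Fin R)) →₀ k))
    (h : ∀ I J, extPDeriv k R I (P J) + extPDeriv k R J (P I) = 0) :
    ∃ Q : (Finset (Fin R)) →₀ k, ∀ I, P I = extPDeriv k R I Q := by
  refine ⟨koszulPrimitive P, fun I => Finsupp.ext fun S => ?_⟩
  by_cases hIS : I ∈ S
  · rw [extPDeriv_apply_of_mem hIS, apply_eq_zero_of_mem_of_pderiv_symm h hIS]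
  · rw [extPDeriv_apply_of_notMem hIS, koszulPrimitive_apply_of_mem h (mem_insert_self I S),
      erase_insert hIS, signBelow_insert_of_not_lt (lt_irrefl I), ← mul_assoc,
      signBelow_mul_self, one_mul]
end
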